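/- Let G be a finite group whose power graph P(G) is C_4-free, let x ∈ G have order pq for distinct primes p, q, and suppose a third prime r (r ≠ p, q) divides |C_G(x)|. Then every Sylow subgroup of C_G(x) has prime exponent (exponent p, q, or r respectively), the Sylow r-subgroup of C_G(x) is normal in C_G(x) and cyclic of order r, and there exist elements y, z ∈ C_G(x) with |y| = r, |z| dividing pq, ⟨y⟩ normal in C_G(x) with ⟨y⟩ ∩ ⟨z⟩ = 1, such that C_G(x) is the internal direct product of ⟨x⟩ and the subgroup ⟨y⟩⟨z⟩ = ⟨y⟩ ⋊ ⟨z⟩. -/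

import Mathlib

/-!
Inside `C = C_G(x)` the element `x` is central. If `a, b ∈ C` have orders prime to `pq` and
neither is a power of the other, then `x a — x^p — x b — x^q` is an induced 4-cycle of the
power graph. Variations of this construction rule out, in `C`, elements of order `ℓ²` for
`ℓ ∈ {p, q, r}`, elements of prime order outside `{p, q, r}`, a second subgroup of order `r`,
and elements of order `p` (or `q`) centralizing `y` but outside `⟨x⟩`, where `y` has order `r`.
Hence every element of `C` has order dividing `pqr`, `⟨y⟩` is the unique Sylow `r`-subgroup, and
`C_C(y) = ⟨x y⟩`. Finally `C / C_C(y)` embeds in `Aut ⟨y⟩ ≅ (ℤ/r)ˣ`, so it is cyclic, and as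
orders in `C` are squarefree a generator lifts to an element `z` with `⟨z⟩` a complement of
`⟨x y⟩`.
-/

/-- Adjacency in the power graph of a group: two distinct elements are adjacent
iff one is a power of the other. -/
def pgAdj {G : Type*} [Group G] (x y : G) : Prop :=
  x ≠ y ∧ (x ∈ Subgroup.zpowers y ∨ y ∈ Subgroup.zpowers x)

/-- The power graph contains an induced 4-cycle. -/
def pgHasInducedC4 (G : Type*) [Group G] : Prop :=
  ∃ x u y v : G,
    x ≠ u ∧ x ≠ y ∧ x ≠ v ∧ u ≠ y ∧ u ≠ v ∧ y ≠ v ∧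
    pgAdj x u ∧ pgAdj u y ∧ pgAdj y v ∧ pgAdj v x ∧
    ¬ pgAdj x y ∧ ¬ pgAdj u v

/-- The power graph is `C₄`-free. -/
def pgC4Free (G : Type*) [Group G] : Prop := ¬ pgHasInducedC4 G

open Subgroup

theorem Nat.Prime.coprime_mul_of_ne {p q r : ℕ} (hr : r.Prime) (hp : p.Prime) (hq : q.Prime)
    (hrp : r ≠ p) (hrq : r ≠ q) : r.Coprime (p * q) :=
  Nat.Coprime.mul_right ((Nat.coprime_primes hr hp).mpr hrp) ((Nat.coprime_primes hr hq).mpr hrq)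

theorem Nat.dvd_of_squarefree_of_forall_prime_dvd {n k : ℕ} (hn : Squarefree n) (hk : k ≠ 0)
    (h : ∀ ℓ, ℓ.Prime → ℓ ∣ n → ℓ ∣ k) : n ∣ k := by
  rw [← Nat.prod_primeFactors_of_squarefree hn, Nat.prod_primeFactors_dvd_iff hk]
  intro ℓ hℓ
  have ⟨hℓp, hℓn, _⟩ := Nat.mem_primeFactors.mp hℓ
  exact Nat.mem_primeFactors.mpr ⟨hℓp, h ℓ hℓp hℓn, hk⟩

section Powers

variable {G : Type*} [Group G]

theorem Commute.mem_zpowers_mul_left {a b : G} (h : Commute a b)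
    (hco : (orderOf a).Coprime (orderOf b)) : a ∈ zpowers (a * b) := by
  have hpow : (a * b) ^ orderOf b = a ^ orderOf b := by
    rw [h.mul_pow, pow_orderOf_eq_one, mul_one]
  exact zpowers_le.mpr (hpow ▸ pow_mem (mem_zpowers _) _) (mem_zpowers_pow_iff.mpr hco.symm)

theorem Commute.mem_zpowers_mul_right {a b : G} (h : Commute a b)
    (hco : (orderOf a).Coprime (orderOf b)) : b ∈ zpowers (a * b) :=
  h.eq ▸ h.symm.mem_zpowers_mul_left hco.symm

theorem Commute.mem_zpowers_of_mem_zpowers_mul {a t c : G} (h : Commute a t)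
    (hc : c ∈ zpowers (a * t)) (hco : (orderOf c).Coprime (orderOf t)) : c ∈ zpowers a := by
  obtain ⟨k, rfl⟩ := mem_zpowers_iff.mp hc
  have hpow : ((a * t) ^ k) ^ orderOf t ∈ zpowers a := by
    rw [← zpow_natCast, ← zpow_mul, mul_comm, zpow_mul, zpow_natCast, h.mul_pow,
      pow_orderOf_eq_one, mul_one]
    exact zpow_mem (pow_mem (mem_zpowers a) _) _
  exact zpowers_le.mpr hpow (mem_zpowers_pow_iff.mpr hco.symm)

theorem notMem_zpowers_of_coprime {a b : G} (ha : orderOf a ≠ 1)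
    (hco : (orderOf a).Coprime (orderOf b)) : a ∉ zpowers b := fun hab =>
  ha (hco.eq_one_of_dvd (orderOf_dvd_of_mem_zpowers hab))

theorem orderOf_pow_of_orderOf_eq_mul {a : G} {m n : ℕ} (ha : orderOf a = m * n) (hm : m ≠ 0) :
    orderOf (a ^ m) = n := by
  rw [orderOf_pow_of_dvd hm (ha ▸ dvd_mul_right m n), ha, Nat.mul_div_cancel_left n
    (Nat.pos_of_ne_zero hm)]

theorem notMem_zpowers_pow_of_orderOf_eq_mul {a : G} {m n : ℕ} (ha : orderOf a = m * n)
    (hn : n ≠ 1) : a ∉ zpowers (a ^ n) := by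
  rw [mem_zpowers_pow_iff, ha, Nat.gcd_mul_left_right]
  exact hn

theorem mem_of_pow_mem_of_coprime {H : Subgroup G} {g : G} {m n : ℕ} (hmn : m.Coprime n)
    (hm : g ^ m ∈ H) (hn : g ^ n ∈ H) : g ∈ H := by
  obtain ⟨u, v, huv⟩ := Nat.isCoprime_iff_coprime.mpr hmn
  have hg : g = (g ^ m) ^ u * (g ^ n) ^ v := by
    rw [← zpow_natCast, ← zpow_natCast g n, ← zpow_mul, ← zpow_mul, ← zpow_add, mul_comm,
      mul_comm _ v, huv, zpow_one]
  rw [hg]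
  exact mul_mem (zpow_mem hm u) (zpow_mem hn v)

theorem mem_zpowers_of_mem_zpowers_of_orderOf_dvd [Finite G] {a b : G} (h : a ∈ zpowers b)
    (hd : orderOf b ∣ orderOf a) : b ∈ zpowers a := by
  have hle : zpowers a ≤ zpowers b := zpowers_le.mpr h
  have hcard : Nat.card (zpowers b) ≤ Nat.card (zpowers a) := by
    rw [Nat.card_zpowers, Nat.card_zpowers]
    exact Nat.le_of_dvd (orderOf_pos a) hd
  exact eq_of_le_of_card_ge hle hcard ▸ mem_zpowers b

end Powers

section Structure

variable {G : Type*} [Group G]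

theorem IsPGroup.orderOf_dvd_of_not_sq_dvd {p : ℕ} [Fact p.Prime] {H : Subgroup G}
    (hH : IsPGroup p H) {g : G} (hg : g ∈ H) (hsq : ¬ p * p ∣ orderOf g) : orderOf g ∣ p := by
  obtain ⟨k, hk⟩ := IsPGroup.iff_orderOf.mp hH ⟨g, hg⟩
  rw [Subgroup.orderOf_mk] at hk
  rw [hk] at hsq ⊢
  have hk1 : k ≤ 1 := not_lt.mp fun h => hsq (by simpa [pow_two] using pow_dvd_pow p h)
  simpa using pow_dvd_pow p hk1

theorem Sylow.exponent_eq_of_not_sq_dvd [Finite G] {p : ℕ} [hp : Fact p.Prime]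
    (hsq : ∀ g : G, ¬ p * p ∣ orderOf g) (hdvd : p ∣ Nat.card G) (P : Sylow p G) :
    Monoid.exponent P = p := by
  have : Nontrivial P := (nontrivial_iff_ne_bot _).mpr (P.ne_bot_of_dvd_card hdvd)
  refine (Monoid.exponent_eq_prime_iff hp.out).mpr fun g hg => ?_
  have hgp := P.isPGroup'.orderOf_dvd_of_not_sq_dvd g.2 (hsq g)
  rw [Subgroup.orderOf_coe] at hgp
  exact ((Nat.dvd_prime hp.out).mp hgp).resolve_left (mt orderOf_eq_one_iff.mp hg)

theorem MulAut.ker_conjNormal (H : Subgroup G) [H.Normal] :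
    (MulAut.conjNormal : G →* MulAut H).ker = centralizer (H : Set G) := by
  ext g
  simp [DFunLike.ext_iff, Subtype.ext_iff, mem_centralizer_iff, eq_mul_inv_iff_mul_eq, eq_comm]

/-- `G / C_G(H)` embeds in `Aut H ≃ (ZMod |H|)ˣ`, which is cyclic for `|H|` prime. -/
theorem isCyclic_quotient_centralizer {H : Subgroup G} [H.Normal] [IsCyclic H]
    (hH : (Nat.card H).Prime) : IsCyclic (G ⧸ centralizer (H : Set G)) := by
  have := Fact.mk hH
  have : IsCyclic (MulAut H) :=
    isCyclic_of_surjective (IsCyclic.mulAutMulEquiv H).symm (MulEquiv.surjective _)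
  exact (QuotientGroup.quotientMulEquivOfEq (MulAut.ker_conjNormal H)).isCyclic.mp
    (isCyclic_of_injective _ (QuotientGroup.kerLift_injective _))

/-- A lift `c` of a generator of `G / N` has order `m * e` with `m = |G / N|` coprime to `e`,
so `c ^ e` has order `m` and maps to a generator. -/
theorem exists_isComplement'_zpowers [Finite G] (N : Subgroup G) [N.Normal] [IsCyclic (G ⧸ N)]
    (hsq : ∀ g : G, Squarefree (orderOf g)) : ∃ z : G, N.IsComplement' (zpowers z) := by
  obtain ⟨a, ha⟩ := IsCyclic.exists_ofOrder_eq_natCard (α := G ⧸ N)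
  obtain ⟨c, rfl⟩ := QuotientGroup.mk'_surjective N a
  obtain ⟨e, he⟩ := orderOf_map_dvd (QuotientGroup.mk' N) c
  have hcop : (orderOf (QuotientGroup.mk' N c)).Coprime e :=
    Nat.coprime_of_squarefree_mul (he ▸ hsq c)
  have he0 : e ≠ 0 := by
    rintro rfl
    exact (orderOf_pos c).ne' (by rw [he, mul_zero])
  have hz : orderOf (c ^ e) = orderOf (QuotientGroup.mk' N c) :=
    orderOf_pow_of_orderOf_eq_mul (he.trans (mul_comm _ _)) he0
  have hz' : orderOf (QuotientGroup.mk' N (c ^ e)) = orderOf (c ^ e) := by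
    rw [map_pow, hcop.orderOf_pow, hz]
  refine ⟨c ^ e, isComplement'_of_card_mul_and_disjoint ?_ ?_⟩
  · rw [Nat.card_zpowers, hz, ha, mul_comm, ← card_eq_card_quotient_mul_card_subgroup]
  · refine disjoint_def.mpr fun {w} hwN hwz => ?_
    obtain ⟨k, rfl⟩ := mem_zpowers_iff.mp hwz
    rw [← orderOf_dvd_iff_zpow_eq_one, ← hz', orderOf_dvd_iff_zpow_eq_one, ← map_zpow]
    exact (QuotientGroup.eq_one_iff _).mpr hwN

theorem disjoint_sup_of_le {H N K D : Subgroup G} [N.Normal] (hHD : H ≤ D) (hND : N ≤ D)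
    (hHN : Disjoint H N) (hDK : Disjoint D K) : Disjoint H (N ⊔ K) := by
  refine disjoint_def.mpr fun {w} hwH hwNK => ?_
  obtain ⟨a, ha, b, hb, rfl⟩ := mem_sup_of_normal_left.mp hwNK
  have hbD : b ∈ D := by simpa using mul_mem (inv_mem (hND ha)) (hHD hwH)
  obtain rfl : b = 1 := disjoint_def.mp hDK hbD hb
  rw [mul_one] at hwH ⊢
  exact disjoint_def.mp hHN hwH ha

end Structure

section PowerGraph

variable {G : Type*} [Group G]

theorem pgAdj_map_iff {H : Type*} [Group H] {f : H →* G} (hf : Function.Injective f) {a b : H} :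
    pgAdj (f a) (f b) ↔ pgAdj a b := by
  simp only [pgAdj, hf.ne_iff, ← MonoidHom.map_zpowers, mem_map_iff_mem hf]

theorem pgC4Free.of_injective {H : Type*} [Group H] (h : pgC4Free G) {f : H →* G}
    (hf : Function.Injective f) : pgC4Free H := by
  rintro ⟨a, b, c, d, h1, h2, h3, h4, h5, h6, a1, a2, a3, a4, n1, n2⟩
  rw [← pgAdj_map_iff hf] at a1 a2 a3 a4 n1 n2
  exact h ⟨f a, f b, f c, f d, hf.ne h1, hf.ne h2, hf.ne h3, hf.ne h4, hf.ne h5, hf.ne h6,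
    a1, a2, a3, a4, n1, n2⟩

theorem pgHasInducedC4_of_common_powers {u v s t : G}
    (hsu : s ∈ zpowers u) (hsv : s ∈ zpowers v) (htu : t ∈ zpowers u) (htv : t ∈ zpowers v)
    (huv : u ∉ zpowers v) (hvu : v ∉ zpowers u) (hst : s ∉ zpowers t) (hts : t ∉ zpowers s) :
    pgHasInducedC4 G := by
  have hus : u ≠ s := fun h => huv (h ▸ hsv)
  have hvs : v ≠ s := fun h => hvu (h ▸ hsu)
  have hut : u ≠ t := fun h => huv (h ▸ htv)
  have hvt : v ≠ t := fun h => hvu (h ▸ htu)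
  have huv' : u ≠ v := fun h => hvu (h ▸ mem_zpowers v)
  have hst' : s ≠ t := fun h => hst (h ▸ mem_zpowers t)
  exact ⟨u, s, v, t, hus, huv', hut, hvs.symm, hst', hvt,
    ⟨hus, Or.inr hsu⟩, ⟨hvs.symm, Or.inl hsv⟩, ⟨hvt, Or.inr htv⟩, ⟨hut.symm, Or.inl htu⟩,
    fun h => h.2.elim huv hvu, fun h => h.2.elim hst hts⟩

/-- The 4-cycle `a * t — s — b * t — s'`: as `⟨a * t⟩ = ⟨a⟩ × ⟨t⟩`, the vertices `a * t` and
`b * t` are not powers of one another. -/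
theorem pgHasInducedC4_of_mul_mul {a b t s s' : G} (hat : Commute a t) (hbt : Commute b t)
    (ha : (orderOf a).Coprime (orderOf t)) (hb : (orderOf b).Coprime (orderOf t))
    (hab : a ∉ zpowers b) (hba : b ∉ zpowers a)
    (hs : s ∈ zpowers (a * t) ⊓ zpowers (b * t)) (hs' : s' ∈ zpowers (a * t) ⊓ zpowers (b * t))
    (hss' : s ∉ zpowers s') (hs's : s' ∉ zpowers s) : pgHasInducedC4 G :=
  pgHasInducedC4_of_common_powers hs.1 hs.2 hs'.1 hs'.2
    (fun h => hab (hbt.mem_zpowers_of_mem_zpowers_mul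
      (zpowers_le.mpr h (hat.mem_zpowers_mul_left ha)) ha))
    (fun h => hba (hat.mem_zpowers_of_mem_zpowers_mul
      (zpowers_le.mpr h (hbt.mem_zpowers_mul_left hb)) hb))
    hss' hs's

theorem zpowers_le_inf_zpowers_mul {a b t : G} (hat : Commute a t) (hbt : Commute b t)
    (ha : (orderOf a).Coprime (orderOf t)) (hb : (orderOf b).Coprime (orderOf t)) :
    zpowers t ≤ zpowers (a * t) ⊓ zpowers (b * t) :=
  le_inf (zpowers_le.mpr (hat.mem_zpowers_mul_right ha))
    (zpowers_le.mpr (hbt.mem_zpowers_mul_right hb))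

end PowerGraph

section CentralElement

variable {G : Type*} [Group G] {p q : ℕ} {x : G}

theorem pgC4Free.mem_zpowers_or_mem_zpowers (hC4 : pgC4Free G) (hp : p.Prime) (hq : q.Prime)
    (hpq : p ≠ q) (hx : orderOf x = p * q) {a b : G} (hxa : Commute x a) (hxb : Commute x b)
    (ha : (orderOf a).Coprime (p * q)) (hb : (orderOf b).Coprime (p * q)) :
    a ∈ zpowers b ∨ b ∈ zpowers a := by
  by_contra! h
  have hxp : orderOf (x ^ p) = q := orderOf_pow_of_orderOf_eq_mul hx hp.ne_zero
  have hxq : orderOf (x ^ q) = p :=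
    orderOf_pow_of_orderOf_eq_mul (hx.trans (mul_comm p q)) hq.ne_zero
  have hco : (orderOf (x ^ p)).Coprime (orderOf (x ^ q)) := by
    rw [hxp, hxq]; exact (Nat.coprime_primes hq hp).mpr hpq.symm
  have hle := zpowers_le_inf_zpowers_mul hxa.symm hxb.symm (hx ▸ ha) (hx ▸ hb)
  exact hC4 (pgHasInducedC4_of_mul_mul hxa.symm hxb.symm (hx ▸ ha) (hx ▸ hb) h.1 h.2
    (hle (pow_mem (mem_zpowers x) p)) (hle (pow_mem (mem_zpowers x) q))
    (notMem_zpowers_of_coprime (by rw [hxp]; exact hq.ne_one) hco)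
    (notMem_zpowers_of_coprime (by rw [hxq]; exact hp.ne_one) hco.symm))

theorem pgC4Free.orderOf_ne_sq_of_coprime (hC4 : pgC4Free G) (hp : p.Prime) (hq : q.Prime)
    (hx : orderOf x = p * q) {r : ℕ} (hr : r.Prime) (hrpq : r.Coprime (p * q)) {g : G}
    (hxg : Commute x g) : orderOf g ≠ r * r := by
  intro hg
  have hxq : orderOf (x ^ q) = p :=
    orderOf_pow_of_orderOf_eq_mul (hx.trans (mul_comm p q)) hq.ne_zero
  have hgr : orderOf (g ^ r) = r := orderOf_pow_of_orderOf_eq_mul hg hr.ne_zero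
  have hrp : r.Coprime p := hrpq.coprime_dvd_right (dvd_mul_right p q)
  have hcq : Commute (x ^ q) g := hxg.pow_left q
  have hcr : Commute (g ^ r) x := (hxg.pow_right r).symm
  have cop_u : (orderOf (x ^ q)).Coprime (orderOf g) := by
    rw [hxq, hg]; exact (hrp.mul_left hrp).symm
  have cop_v : (orderOf (g ^ r)).Coprime (orderOf x) := by rw [hgr, hx]; exact hrpq
  have cop_gx : (orderOf g).Coprime (orderOf x) := by rw [hg, hx]; exact hrpq.mul_left hrpq
  refine hC4 (pgHasInducedC4_of_common_powers (u := x ^ q * g) (v := g ^ r * x)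
    (hcq.mem_zpowers_mul_left cop_u) (pow_mem (hcr.mem_zpowers_mul_right cop_v) q)
    (pow_mem (hcq.mem_zpowers_mul_right cop_u) r) (hcr.mem_zpowers_mul_left cop_v) ?_ ?_
    (notMem_zpowers_of_coprime (by rw [hxq]; exact hp.ne_one) (by rw [hxq, hgr]; exact hrp.symm))
    (notMem_zpowers_of_coprime (by rw [hgr]; exact hr.ne_one) (by rw [hxq, hgr]; exact hrp)))
  · intro h
    exact notMem_zpowers_pow_of_orderOf_eq_mul hg hr.ne_one
      (hcr.mem_zpowers_of_mem_zpowers_mul (zpowers_le.mpr h (hcq.mem_zpowers_mul_right cop_u))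
        cop_gx)
  · intro h
    exact notMem_zpowers_pow_of_orderOf_eq_mul hx hq.ne_one
      (hcq.mem_zpowers_of_mem_zpowers_mul (zpowers_le.mpr h (hcr.mem_zpowers_mul_right cop_v))
        cop_gx.symm)

theorem pgC4Free.pow_mem_zpowers_of_orderOf_eq_sq [Finite G] (hC4 : pgC4Free G) (hp : p.Prime)
    (hq : q.Prime) (hpq : p ≠ q) (hx : orderOf x = p * q) {g : G} (hxg : Commute x g)
    (hg : orderOf g = p * p) : x ^ q ∈ zpowers g := by
  by_contra hxq_g
  -- then `g` and `g * x ^ q` are not powers of one another but have the same `p`-th power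
  have hpq' : p.Coprime q := (Nat.coprime_primes hp hq).mpr hpq
  have hxp : orderOf (x ^ p) = q := orderOf_pow_of_orderOf_eq_mul hx hp.ne_zero
  have hgp : orderOf (g ^ p) = p := orderOf_pow_of_orderOf_eq_mul hg hp.ne_zero
  have hat : Commute g (x ^ p) := (hxg.pow_left p).symm
  have hbt : Commute (g * x ^ q) (x ^ p) := hat.mul_left ((Commute.refl x).pow_pow q p)
  have ha : (orderOf g).Coprime (orderOf (x ^ p)) := by
    rw [hg, hxp]; exact hpq'.mul_left hpq'
  have hbp : (g * x ^ q) ^ p = g ^ p := by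
    rw [(hxg.symm.pow_right q).mul_pow, ← pow_mul, mul_comm, ← hx, pow_orderOf_eq_one, mul_one]
  have hb_dvd : orderOf (g * x ^ q) ∣ orderOf g := by
    refine orderOf_dvd_of_pow_eq_one ?_
    rw [hg, pow_mul, hbp, ← pow_mul, ← hg, pow_orderOf_eq_one]
  have hb : (orderOf (g * x ^ q)).Coprime (orderOf (x ^ p)) := ha.coprime_dvd_left hb_dvd
  have hba : g * x ^ q ∉ zpowers g := fun h =>
    hxq_g (by simpa using mul_mem (inv_mem (mem_zpowers g)) h)
  have hco : (orderOf (g ^ p)).Coprime (orderOf (x ^ p)) := by rw [hgp, hxp]; exact hpq'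
  exact hC4 (pgHasInducedC4_of_mul_mul hat hbt ha hb
    (fun h => hba (mem_zpowers_of_mem_zpowers_of_orderOf_dvd h hb_dvd)) hba
    ⟨pow_mem (hat.mem_zpowers_mul_left ha) p, hbp ▸ pow_mem (hbt.mem_zpowers_mul_left hb) p⟩
    (zpowers_le_inf_zpowers_mul hat hbt ha hb (mem_zpowers _))
    (notMem_zpowers_of_coprime (by rw [hgp]; exact hp.ne_one) hco)
    (notMem_zpowers_of_coprime (by rw [hxp]; exact hq.ne_one) hco.symm))

theorem pgC4Free.orderOf_ne_sq [Finite G] (hC4 : pgC4Free G) (hp : p.Prime) (hq : q.Prime)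
    (hpq : p ≠ q) (hx : orderOf x = p * q) {y : G} (hxy : Commute x y)
    (hy : (orderOf y).Coprime (p * q)) (hy1 : orderOf y ≠ 1) {g : G} (hxg : Commute x g) :
    orderOf g ≠ p * p := by
  intro hg
  have hxq_g := hC4.pow_mem_zpowers_of_orderOf_eq_sq hp hq hpq hx hxg hg
  have hxp : orderOf (x ^ p) = q := orderOf_pow_of_orderOf_eq_mul hx hp.ne_zero
  have hxq : orderOf (x ^ q) = p :=
    orderOf_pow_of_orderOf_eq_mul (hx.trans (mul_comm p q)) hq.ne_zero
  have hyp : (orderOf y).Coprime p := hy.coprime_dvd_right (dvd_mul_right p q)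
  have hyq : (orderOf y).Coprime q := hy.coprime_dvd_right (dvd_mul_left q p)
  have hgt : Commute g (x ^ p) := (hxg.pow_left p).symm
  have cop_u : (orderOf g).Coprime (orderOf (x ^ p)) := by
    rw [hg, hxp]
    exact ((Nat.coprime_primes hp hq).mpr hpq).mul_left ((Nat.coprime_primes hp hq).mpr hpq)
  have cop_v : (orderOf x).Coprime (orderOf y) := hx ▸ hy.symm
  refine hC4 (pgHasInducedC4_of_common_powers (u := g * x ^ p) (v := x * y)
    (zpowers_le.mpr (hgt.mem_zpowers_mul_left cop_u) hxq_g)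
    (pow_mem (hxy.mem_zpowers_mul_left cop_v) q)
    (hgt.mem_zpowers_mul_right cop_u) (pow_mem (hxy.mem_zpowers_mul_left cop_v) p) ?_ ?_
    (notMem_zpowers_of_coprime (by rw [hxq]; exact hp.ne_one)
      (by rw [hxq, hxp]; exact (Nat.coprime_primes hp hq).mpr hpq))
    (notMem_zpowers_of_coprime (by rw [hxp]; exact hq.ne_one)
      (by rw [hxq, hxp]; exact (Nat.coprime_primes hq hp).mpr hpq.symm)))
  · intro h
    have hgx : g ∈ zpowers x := hxy.mem_zpowers_of_mem_zpowers_mul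
      (zpowers_le.mpr h (hgt.mem_zpowers_mul_left cop_u))
      (by rw [hg]; exact (hyp.mul_right hyp).symm)
    have hpp : p * p ∣ p * q := hg ▸ hx ▸ orderOf_dvd_of_mem_zpowers hgx
    exact hpq ((Nat.prime_dvd_prime_iff_eq hp hq).mp (Nat.dvd_of_mul_dvd_mul_left hp.pos hpp))
  · intro h
    have hyg : y ∈ zpowers g := hgt.mem_zpowers_of_mem_zpowers_mul
      (zpowers_le.mpr h (hxy.mem_zpowers_mul_right cop_v)) (by rw [hxp]; exact hyq)
    exact notMem_zpowers_of_coprime hy1 (by rw [hg]; exact hyp.mul_right hyp) hyg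

theorem pgC4Free.mem_zpowers_pow_of_pow_eq_one [Finite G] (hC4 : pgC4Free G) (hp : p.Prime)
    (hq : q.Prime) (hpq : p ≠ q) (hx : orderOf x = p * q) {y : G} (hxy : Commute x y)
    (hy : (orderOf y).Coprime (p * q)) (hy1 : orderOf y ≠ 1) {w : G} (hxw : Commute x w)
    (hyw : Commute y w) (hw : w ^ p = 1) : w ∈ zpowers (x ^ q) := by
  by_contra hw_x
  have hxp : orderOf (x ^ p) = q := orderOf_pow_of_orderOf_eq_mul hx hp.ne_zero
  have hxq : orderOf (x ^ q) = p :=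
    orderOf_pow_of_orderOf_eq_mul (hx.trans (mul_comm p q)) hq.ne_zero
  have hyp : (orderOf y).Coprime p := hy.coprime_dvd_right (dvd_mul_right p q)
  have hyq : (orderOf y).Coprime q := hy.coprime_dvd_right (dvd_mul_left q p)
  have hst : Commute (x ^ p) y := hxy.pow_left p
  have cop_st : (orderOf (x ^ p)).Coprime (orderOf y) := by rw [hxp]; exact hyq.symm
  have hat : Commute (x ^ q) (x ^ p * y) :=
    ((Commute.refl x).pow_pow q p).mul_right (hxy.pow_left q)
  have hbt : Commute (x ^ q * w) (x ^ p * y) :=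
    hat.mul_left ((hxw.pow_left p).symm.mul_right hyw.symm)
  have ha : (orderOf (x ^ q)).Coprime (orderOf (x ^ p * y)) := by
    rw [hst.orderOf_mul_eq_mul_orderOf_of_coprime cop_st, hxq, hxp]
    exact ((Nat.coprime_primes hp hq).mpr hpq).mul_right hyp.symm
  have hb_dvd : orderOf (x ^ q * w) ∣ orderOf (x ^ q) := by
    refine orderOf_dvd_of_pow_eq_one ?_
    rw [hxq, (hxw.pow_left q).mul_pow, hw, mul_one, ← pow_mul, mul_comm, ← hx,
      pow_orderOf_eq_one]
  have hb : (orderOf (x ^ q * w)).Coprime (orderOf (x ^ p * y)) := ha.coprime_dvd_left hb_dvd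
  have hba : x ^ q * w ∉ zpowers (x ^ q) := fun h =>
    hw_x (by simpa using mul_mem (inv_mem (mem_zpowers (x ^ q))) h)
  have hle := zpowers_le_inf_zpowers_mul hat hbt ha hb
  exact hC4 (pgHasInducedC4_of_mul_mul hat hbt ha hb
    (fun h => hba (mem_zpowers_of_mem_zpowers_of_orderOf_dvd h hb_dvd)) hba
    (hle (hst.mem_zpowers_mul_left cop_st)) (hle (hst.mem_zpowers_mul_right cop_st))
    (notMem_zpowers_of_coprime (by rw [hxp]; exact hq.ne_one) cop_st)
    (notMem_zpowers_of_coprime hy1 cop_st.symm))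

end CentralElement

/-- The hypotheses valid in `C_G(x)` (playing the role of `G`), once an element `y` of order `r`
is chosen. -/
structure CentralizerSetting (G : Type*) [Group G] (p q r : ℕ) (x y : G) : Prop where
  pgC4Free : pgC4Free G
  prime_p : p.Prime
  prime_q : q.Prime
  prime_r : r.Prime
  p_ne_q : p ≠ q
  r_ne_p : r ≠ p
  r_ne_q : r ≠ q
  orderOf_x : orderOf x = p * q
  orderOf_y : orderOf y = r
  commute_x : ∀ g, Commute x g

namespace CentralizerSetting

variable {G : Type*} [Group G] {p q r : ℕ} {x y : G}

theorem swap (S : CentralizerSetting G p q r x y) : CentralizerSetting G q p r x y :=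
  ⟨S.pgC4Free, S.prime_q, S.prime_p, S.prime_r, S.p_ne_q.symm, S.r_ne_q, S.r_ne_p,
    S.orderOf_x.trans (mul_comm p q), S.orderOf_y, S.commute_x⟩

theorem coprime_r (S : CentralizerSetting G p q r x y) : r.Coprime (p * q) :=
  S.prime_r.coprime_mul_of_ne S.prime_p S.prime_q S.r_ne_p S.r_ne_q

theorem orderOf_y_coprime (S : CentralizerSetting G p q r x y) : (orderOf y).Coprime (p * q) :=
  S.orderOf_y ▸ S.coprime_r

variable [Finite G]

theorem mem_zpowers_of_pow_eq_one (S : CentralizerSetting G p q r x y) {w : G} (hw : w ^ r = 1) :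
    w ∈ zpowers y := by
  have := Fact.mk S.prime_r
  rcases eq_or_ne w 1 with rfl | hw1
  · exact one_mem _
  have hwr : orderOf w = r := orderOf_eq_prime hw hw1
  rcases S.pgC4Free.mem_zpowers_or_mem_zpowers S.prime_p S.prime_q S.p_ne_q S.orderOf_x
    (S.commute_x w) (S.commute_x y) (hwr ▸ S.coprime_r) S.orderOf_y_coprime with h | h
  · exact h
  · exact mem_zpowers_of_mem_zpowers_of_orderOf_dvd h (by rw [hwr, S.orderOf_y])

theorem prime_dvd_orderOf (S : CentralizerSetting G p q r x y) {g : G} {ℓ : ℕ} (hℓ : ℓ.Prime)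
    (hdvd : ℓ ∣ orderOf g) : ℓ = p ∨ ℓ = q ∨ ℓ = r := by
  by_contra! h
  have hw : orderOf (g ^ (orderOf g / ℓ)) = ℓ := orderOf_pow_orderOf_div (orderOf_pos g).ne' hdvd
  rcases S.pgC4Free.mem_zpowers_or_mem_zpowers S.prime_p S.prime_q S.p_ne_q S.orderOf_x
    (S.commute_x _) (S.commute_x y)
    (hw ▸ hℓ.coprime_mul_of_ne S.prime_p S.prime_q h.1 h.2.1) S.orderOf_y_coprime with h' | h'
  · exact h.2.2 ((Nat.prime_dvd_prime_iff_eq hℓ S.prime_r).mp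
      (hw ▸ S.orderOf_y ▸ orderOf_dvd_of_mem_zpowers h'))
  · exact h.2.2 ((Nat.prime_dvd_prime_iff_eq S.prime_r hℓ).mp
      (hw ▸ S.orderOf_y ▸ orderOf_dvd_of_mem_zpowers h')).symm

theorem not_sq_dvd_orderOf (S : CentralizerSetting G p q r x y) (g : G) {ℓ : ℕ} (hℓ : ℓ.Prime) :
    ¬ ℓ * ℓ ∣ orderOf g := by
  intro hdvd
  have hw := orderOf_pow_orderOf_div (orderOf_pos g).ne' hdvd
  have hy1 : orderOf y ≠ 1 := by rw [S.orderOf_y]; exact S.prime_r.ne_one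
  rcases S.prime_dvd_orderOf hℓ ((dvd_mul_right ℓ ℓ).trans hdvd) with rfl | rfl | rfl
  · exact S.pgC4Free.orderOf_ne_sq S.prime_p S.prime_q S.p_ne_q S.orderOf_x (S.commute_x y)
      S.orderOf_y_coprime hy1 (S.commute_x _) hw
  · exact S.pgC4Free.orderOf_ne_sq S.swap.prime_p S.swap.prime_q S.swap.p_ne_q S.swap.orderOf_x
      (S.commute_x y) S.swap.orderOf_y_coprime hy1 (S.commute_x _) hw
  · exact S.pgC4Free.orderOf_ne_sq_of_coprime S.prime_p S.prime_q S.orderOf_x S.prime_r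
      S.coprime_r (S.commute_x _) hw

theorem orderOf_dvd (S : CentralizerSetting G p q r x y) (g : G) : orderOf g ∣ p * q * r := by
  refine Nat.dvd_of_squarefree_of_forall_prime_dvd
    (Nat.squarefree_iff_prime_squarefree.mpr fun ℓ hℓ =>
      S.not_sq_dvd_orderOf g hℓ)
    (Nat.mul_ne_zero (Nat.mul_ne_zero S.prime_p.ne_zero S.prime_q.ne_zero) S.prime_r.ne_zero)
    fun ℓ hℓ hdvd => ?_
  rcases S.prime_dvd_orderOf hℓ hdvd with rfl | rfl | rfl
  · exact dvd_mul_of_dvd_left (dvd_mul_right _ _) _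
  · exact dvd_mul_of_dvd_left (dvd_mul_left _ _) _
  · exact dvd_mul_left _ _

theorem zpowers_normal (S : CentralizerSetting G p q r x y) : (zpowers y).Normal := by
  refine ⟨fun n hn g => ?_⟩
  obtain ⟨k, rfl⟩ := mem_zpowers_iff.mp hn
  rw [← conj_zpow]
  refine zpow_mem (S.mem_zpowers_of_pow_eq_one ?_) k
  rw [conj_pow, ← S.orderOf_y, pow_orderOf_eq_one, mul_one, mul_inv_cancel]

theorem sylow_eq_zpowers (S : CentralizerSetting G p q r x y) (R : Sylow r G) :
    (R : Subgroup G) = zpowers y := by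
  have := Fact.mk S.prime_r
  have hle : (R : Subgroup G) ≤ zpowers y := fun g hg => S.mem_zpowers_of_pow_eq_one
    (orderOf_dvd_iff_pow_eq_one.mp
      (R.isPGroup'.orderOf_dvd_of_not_sq_dvd hg (S.not_sq_dvd_orderOf g S.prime_r)))
  exact (R.is_maximal' (IsPGroup.of_card (n := 1) (by rw [Nat.card_zpowers, S.orderOf_y,
    pow_one])) hle).symm

theorem centralizer_zpowers (S : CentralizerSetting G p q r x y) :
    centralizer (zpowers y : Set G) = zpowers x ⊔ zpowers y := by
  have hy1 : orderOf y ≠ 1 := by rw [S.orderOf_y]; exact S.prime_r.ne_one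
  have hC : centralizer (zpowers y : Set G) = centralizer {y} := by
    rw [zpowers_eq_closure, centralizer_closure]
  rw [hC]
  refine le_antisymm (fun d hd => ?_) (sup_le
    (zpowers_le.mpr (mem_centralizer_singleton_iff.mpr (S.commute_x y).eq))
    (zpowers_le.mpr (mem_centralizer_singleton_iff.mpr rfl)))
  have hdy : Commute y d := (mem_centralizer_singleton_iff.mp hd).symm
  have hd1 : d ^ (p * q * r) = 1 := orderOf_dvd_iff_pow_eq_one.mp (S.orderOf_dvd d)
  refine mem_of_pow_mem_of_coprime S.coprime_r.symm
    (mem_sup_right (S.mem_zpowers_of_pow_eq_one (by rw [← pow_mul, hd1])))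
    (mem_sup_left (mem_of_pow_mem_of_coprime
      ((Nat.coprime_primes S.prime_q S.prime_p).mpr S.p_ne_q.symm)
      (zpowers_le.mpr (pow_mem (mem_zpowers x) q) ?_)
      (zpowers_le.mpr (pow_mem (mem_zpowers x) p) ?_)))
  · refine S.pgC4Free.mem_zpowers_pow_of_pow_eq_one S.prime_p S.prime_q S.p_ne_q S.orderOf_x
      (S.commute_x y) S.orderOf_y_coprime hy1 (S.commute_x _) ((hdy.pow_right r).pow_right q) ?_
    rw [← pow_mul, ← pow_mul, ← hd1]; ring_nf
  · refine S.pgC4Free.mem_zpowers_pow_of_pow_eq_one S.swap.prime_p S.swap.prime_q S.swap.p_ne_q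
      S.swap.orderOf_x (S.commute_x y) S.swap.orderOf_y_coprime hy1 (S.commute_x _)
      ((hdy.pow_right r).pow_right p) ?_
    rw [← pow_mul, ← pow_mul, ← hd1]; ring_nf

theorem exists_complement (S : CentralizerSetting G p q r x y) :
    ∃ z : G, orderOf z ∣ p * q ∧ zpowers y ⊓ zpowers z = ⊥ ∧
      zpowers x ⊓ (zpowers y ⊔ zpowers z) = ⊥ ∧ zpowers x ⊔ (zpowers y ⊔ zpowers z) = ⊤ := by
  have := S.zpowers_normal
  have hsq : Squarefree (p * q * r) :=
    (Nat.squarefree_mul S.coprime_r.symm).mpr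
      ⟨(Nat.squarefree_mul ((Nat.coprime_primes S.prime_p S.prime_q).mpr S.p_ne_q)).mpr
        ⟨S.prime_p.prime.squarefree, S.prime_q.prime.squarefree⟩, S.prime_r.prime.squarefree⟩
  have := isCyclic_quotient_centralizer (H := zpowers y)
    (by rw [Nat.card_zpowers, S.orderOf_y]; exact S.prime_r)
  obtain ⟨z, hz⟩ := exists_isComplement'_zpowers (centralizer (zpowers y : Set G))
    fun g => hsq.squarefree_of_dvd (S.orderOf_dvd g)
  rw [S.centralizer_zpowers] at hz
  have hco : (orderOf x).Coprime (orderOf y) := S.orderOf_x ▸ S.orderOf_y_coprime.symm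
  have hyz : Disjoint (zpowers y) (zpowers z) := hz.disjoint.mono_left le_sup_right
  refine ⟨z, ?_, hyz.eq_bot, ?_, ?_⟩
  · have hr : ¬ r ∣ orderOf z := fun hdvd => by
      have hw := orderOf_pow_orderOf_div (orderOf_pos z).ne' hdvd
      have hw1 := disjoint_def.mp hyz (S.mem_zpowers_of_pow_eq_one (by rw [← hw,
        pow_orderOf_eq_one])) (pow_mem (mem_zpowers z) _)
      exact S.prime_r.ne_one (by rw [← hw, hw1, orderOf_one])
    exact (((Nat.Prime.coprime_iff_not_dvd S.prime_r).mpr hr).symm).dvd_of_dvd_mul_right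
      (S.orderOf_dvd z)
  · exact (disjoint_sup_of_le le_sup_left le_sup_right (disjoint_of_coprime_natCard
      (by rw [Nat.card_zpowers, Nat.card_zpowers]; exact hco)) hz.disjoint).eq_bot
  · rw [← sup_assoc, hz.sup_eq_top]

end CentralizerSetting

theorem centralizer_structure_of_order_pq_third_prime {G : Type*} [Group G] [Finite G]
    (h : pgC4Free G) (p q r : ℕ) (hp : p.Prime) (hq : q.Prime) (hr : r.Prime)
    (hpq : p ≠ q) (hrp : r ≠ p) (hrq : r ≠ q)
    (x : G) (hx : orderOf x = p * q)
    (hdvd : r ∣ Nat.card (Subgroup.centralizer ({x} : Set G))) :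
    (∀ P : Sylow p (Subgroup.centralizer ({x} : Set G)),
        Monoid.exponent (P : Subgroup (Subgroup.centralizer ({x} : Set G))) = p) ∧
    (∀ Q : Sylow q (Subgroup.centralizer ({x} : Set G)),
        Monoid.exponent (Q : Subgroup (Subgroup.centralizer ({x} : Set G))) = q) ∧
    (∀ R : Sylow r (Subgroup.centralizer ({x} : Set G)),
        (R : Subgroup (Subgroup.centralizer ({x} : Set G))).Normal ∧
        IsCyclic (R : Subgroup (Subgroup.centralizer ({x} : Set G))) ∧
        Nat.card (R : Subgroup (Subgroup.centralizer ({x} : Set G))) = r) ∧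
    (∃ xc y z : (Subgroup.centralizer ({x} : Set G)),
        (xc : G) = x ∧ orderOf y = r ∧ orderOf z ∣ p * q ∧
        (Subgroup.zpowers y).Normal ∧
        Subgroup.zpowers y ⊓ Subgroup.zpowers z = ⊥ ∧
        Subgroup.zpowers xc ⊓ (Subgroup.zpowers y ⊔ Subgroup.zpowers z) = ⊥ ∧
        Subgroup.zpowers xc ⊔ (Subgroup.zpowers y ⊔ Subgroup.zpowers z) = ⊤ ∧
        ∀ a ∈ Subgroup.zpowers xc, ∀ b ∈ Subgroup.zpowers y ⊔ Subgroup.zpowers z,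
          Commute a b) := by
  have := Fact.mk hp
  have := Fact.mk hq
  have := Fact.mk hr
  have hxC : x ∈ centralizer ({x} : Set G) := mem_centralizer_singleton_iff.mpr rfl
  obtain ⟨y, hy⟩ := exists_prime_orderOf_dvd_card' r hdvd
  have S : CentralizerSetting _ p q r ⟨x, hxC⟩ y :=
    ⟨h.of_injective (subtype_injective _), hp, hq, hr, hpq, hrp, hrq,
      by rw [Subgroup.orderOf_mk, hx], hy,
      fun g => Subtype.ext (mem_centralizer_singleton_iff.mp g.2).symm⟩
  have hpq_dvd : p * q ∣ Nat.card (centralizer ({x} : Set G)) :=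
    S.orderOf_x ▸ orderOf_dvd_natCard _
  obtain ⟨z, hz, hyz, hxyz, htop⟩ := S.exists_complement
  refine ⟨Sylow.exponent_eq_of_not_sq_dvd (fun g => S.not_sq_dvd_orderOf g hp)
      ((dvd_mul_right p q).trans hpq_dvd),
    Sylow.exponent_eq_of_not_sq_dvd (fun g => S.not_sq_dvd_orderOf g hq)
      ((dvd_mul_left q p).trans hpq_dvd),
    fun R => ?_, ⟨x, hxC⟩, y, z, rfl, hy, hz, S.zpowers_normal, hyz, hxyz, htop,
    fun a ha b _ => ?_⟩
  · rw [S.sylow_eq_zpowers R]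
    exact ⟨S.zpowers_normal, inferInstance, by rw [Nat.card_zpowers, hy]⟩
  · obtain ⟨k, rfl⟩ := mem_zpowers_iff.mp ha
    exact (S.commute_x b).zpow_left k
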